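/- arXiv:1711.07179 — 6 statements merged into one kernel-verified Lean document; each statement's English description precedes it below -/
import Mathlib

section
/- For every integer q ≥ 7, the sequences a_k = q^{-k} and b_k = 2^{q^k} satisfy: for all m ≥ 2, the partial sum ∑_{k=1}^{m-1} a_k b_k ≤ (1/(q-1)) · a_m b_m. -/
/-!
The terms `s k = 2 ^ q ^ k / q ^ k` grow at least geometrically with ratio `q`, because
`q ^ 2 * 2 ^ q ^ k ≤ 2 ^ q ^ (k + 1)`. A sum of terms growing with ratio `r > 1` is bounded
by the next term divided by `r - 1`.
-/

open Finset

theorem Nat.sq_mul_two_pow_pow_le_two_pow_pow_succ {q n : ℕ} (hq : 2 ≤ q) (hn : 1 ≤ n) :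
    q ^ 2 * 2 ^ (q ^ n) ≤ 2 ^ (q ^ (n + 1)) := by
  obtain ⟨p, rfl⟩ : ∃ p, q = p + 1 := ⟨q - 1, by omega⟩
  have hq_le : p + 1 ≤ 2 ^ p := Nat.lt_two_pow_self
  have hpow : 2 ≤ (p + 1) ^ n := le_trans hq (Nat.le_self_pow (by omega) _)
  have hexp : 2 * p + (p + 1) ^ n ≤ (p + 1) ^ (n + 1) := by
    rw [pow_succ]; nlinarith
  calc (p + 1) ^ 2 * 2 ^ ((p + 1) ^ n) ≤ (2 ^ p) ^ 2 * 2 ^ ((p + 1) ^ n) := by gcongr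
    _ = 2 ^ (2 * p + (p + 1) ^ n) := by rw [← pow_mul, ← pow_add, mul_comm]
    _ ≤ 2 ^ ((p + 1) ^ (n + 1)) := Nat.pow_le_pow_right two_pos hexp

theorem sum_Ico_le_div_sub_one_of_mul_le {s : ℕ → ℝ} {r : ℝ} {a : ℕ} (hr : 1 < r)
    (hsa : 0 ≤ s a) (hs : ∀ k ≥ a, r * s k ≤ s (k + 1)) {n : ℕ} (han : a ≤ n) :
    ∑ k ∈ Ico a n, s k ≤ s n / (r - 1) := by
  have hr1 : 0 < r - 1 := by linarith
  induction n, han using Nat.le_induction with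
  | base => simpa using div_nonneg hsa hr1.le
  | succ n han ih =>
    calc ∑ k ∈ Ico a (n + 1), s k ≤ s n / (r - 1) + s n := by
          rw [sum_Ico_succ_top han]; gcongr
      _ = r * s n / (r - 1) := by field_simp; ring
      _ ≤ s (n + 1) / (r - 1) := by gcongr; exact hs n han

theorem mul_inv_pow_mul_two_pow_pow_le {q k : ℕ} (hq : 2 ≤ q) (hk : 1 ≤ k) :
    (q : ℝ) * (((q : ℝ) ^ k)⁻¹ * 2 ^ (q ^ k)) ≤ ((q : ℝ) ^ (k + 1))⁻¹ * 2 ^ (q ^ (k + 1)) := by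
  have hgrowth : (q : ℝ) ^ 2 * 2 ^ (q ^ k) ≤ 2 ^ (q ^ (k + 1)) := by
    exact_mod_cast Nat.sq_mul_two_pow_pow_le_two_pow_pow_succ hq hk
  have hq0 : (0 : ℝ) < q := by positivity
  rw [le_inv_mul_iff₀ (by positivity)]
  calc (q : ℝ) ^ (k + 1) * ((q : ℝ) * (((q : ℝ) ^ k)⁻¹ * 2 ^ (q ^ k)))
      = (q : ℝ) ^ 2 * 2 ^ (q ^ k) := by field_simp; ring
    _ ≤ 2 ^ (q ^ (k + 1)) := hgrowth

/-- For every integer `q ≥ 7`, with `a k = q⁻ᵏ` and `b k = 2^(q^k)`, for all `m ≥ 2`,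
`∑_{k=1}^{m-1} a k * b k ≤ (1/(q-1)) * a m * b m`. -/
theorem stmt0 (q : ℕ) (hq : 7 ≤ q) (m : ℕ) (hm : 2 ≤ m) :
    ∑ k ∈ Finset.Icc 1 (m - 1), ((q : ℝ) ^ k)⁻¹ * (2 : ℝ) ^ (q ^ k)
      ≤ (1 / ((q : ℝ) - 1)) * (((q : ℝ) ^ m)⁻¹ * (2 : ℝ) ^ (q ^ m)) := by
  rw [Icc_sub_one_right_eq_Ico_of_not_isMin (not_isMin_of_lt hm), one_div_mul_eq_div]
  refine sum_Ico_le_div_sub_one_of_mul_le (s := fun k => ((q : ℝ) ^ k)⁻¹ * 2 ^ (q ^ k))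
    (by exact_mod_cast (by omega : 1 < q)) (by positivity)
    (fun k hk => mul_inv_pow_mul_two_pow_pow_le (by omega) hk) (by omega)
end

section
/- The constant γ := (1/5) · min_{z ∈ [0,2π]} ∫_1^2 |sin(z+t) − sin(z)| t^{−2} dt is strictly positive. -/
open Real Set

/-!
The integral depends continuously on `z`, so on the compact interval `[0, 2π]` its infimum is
attained, and it suffices that each integral is positive. Its integrand is continuous and
nonnegative, so it is enough that it does not vanish at both `t = 1` and `t = 2`. By
`sin (z + t) - sin z = 2 sin (t / 2) cos (z + t / 2)`, vanishing at both would force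
`cos (z + 1 / 2) = cos (z + 1) = 0`, impossible for two points closer than `π`.
-/

theorem cos_add_half_eq_zero_of_sin_add_eq {z a : ℝ} (ha₀ : 0 < a) (ha : a < 2 * π)
    (h : sin (z + a) = sin z) : cos (z + a / 2) = 0 := by
  have hsin : 0 < sin (a / 2) := sin_pos_of_pos_of_lt_pi (by linarith) (by linarith)
  have key := Real.sin_sub_sin (z + a) z
  rw [h, sub_self, show (z + a - z) / 2 = a / 2 by ring,
    show (z + a + z) / 2 = z + a / 2 by ring] at key
  nlinarith [key]

theorem sin_add_ne_or_sin_add_ne {z a b : ℝ} (ha : 0 < a) (hab : a < b) (hb : b < 2 * π) :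
    sin (z + a) ≠ sin z ∨ sin (z + b) ≠ sin z := by
  by_contra! ⟨hza, hzb⟩
  have hca := cos_add_half_eq_zero_of_sin_add_eq ha (by linarith) hza
  have hcb := cos_add_half_eq_zero_of_sin_add_eq (by linarith) hb hzb
  have hsin : 0 < sin ((b - a) / 2) := sin_pos_of_pos_of_lt_pi (by linarith) (by linarith)
  -- `cos (x + h) = - sin x * sin h` at a zero `x` of `cos`, so `sin x` would vanish as well
  have hsa : sin (z + a / 2) = 0 := by
    rw [show z + b / 2 = z + a / 2 + (b - a) / 2 by ring, cos_add, hca] at hcb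
    nlinarith
  simpa [hca, hsa] using sin_sq_add_cos_sq (z + a / 2)

theorem integral_abs_sin_add_sub_sin_div_sq_pos (z : ℝ) {a b : ℝ} (ha : 0 < a) (hab : a < b)
    (hb : b < 2 * π) : 0 < ∫ t in a..b, |sin (z + t) - sin z| / t ^ 2 := by
  refine intervalIntegral.integral_pos hab ?_ (fun t _ => by positivity) ?_
  · refine ContinuousOn.div (by fun_prop) (by fun_prop) fun t ht => ?_
    exact pow_ne_zero 2 (by linarith [ht.1])
  · obtain h | h := sin_add_ne_or_sin_add_ne (z := z) ha hab hb
    · exact ⟨a, left_mem_Icc.2 hab.le, div_pos (abs_pos.2 (sub_ne_zero.2 h)) (pow_pos ha 2)⟩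
    · exact ⟨b, right_mem_Icc.2 hab.le,
        div_pos (abs_pos.2 (sub_ne_zero.2 h)) (pow_pos (ha.trans hab) 2)⟩

theorem continuous_integral_abs_sin_add_sub_sin_div_sq {a b : ℝ} (ha : 0 < a) (hb : 0 < b) :
    Continuous fun z => ∫ t in a..b, |sin (z + t) - sin z| / t ^ 2 := by
  refine intervalIntegral.continuous_of_dominated_interval (bound := fun t => 2 / t ^ 2)
    (fun z => (by fun_prop : Measurable _).aestronglyMeasurable) ?_ ?_
    (Filter.Eventually.of_forall fun t _ => by fun_prop)
  · refine fun z => Filter.Eventually.of_forall fun t _ => ?_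
    rw [Real.norm_eq_abs, abs_div, abs_abs, abs_of_nonneg (sq_nonneg t)]
    gcongr
    exact (abs_sub _ _).trans (by linarith [abs_sin_le_one (z + t), abs_sin_le_one z])
  · refine ContinuousOn.intervalIntegrable (ContinuousOn.div continuousOn_const
      (by fun_prop) fun t ht => pow_ne_zero 2 ((lt_min ha hb).trans_le ht.1).ne')

/-- The constant `γ = (1/5) · min_{z ∈ [0,2π]} ∫_1^2 |sin(z+t) − sin z| t⁻² dt`
is strictly positive. -/
theorem stmt4 :
    0 < (1 / 5 : ℝ) * sInf ((fun z : ℝ =>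
      ∫ t in (1:ℝ)..2, |Real.sin (z + t) - Real.sin z| / t ^ 2) '' Set.Icc 0 (2 * π)) := by
  set F := fun z : ℝ => ∫ t in (1:ℝ)..2, |Real.sin (z + t) - Real.sin z| / t ^ 2
  have hF : Continuous F := continuous_integral_abs_sin_add_sub_sin_div_sq one_pos two_pos
  obtain ⟨z, -, hz⟩ := (isCompact_Icc.image hF).sInf_mem
    ((nonempty_Icc.2 two_pi_pos.le).image F)
  rw [← hz]
  exact mul_pos (by norm_num)
    (integral_abs_sin_add_sub_sin_div_sq_pos z one_pos one_lt_two (by linarith [pi_gt_three]))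
end

section
/- Let f be a continuous 2π-periodic function such that for every x ∈ [0, 2π], ε ∈ (0,1) and p ≥ 1, ∫_0^{2π} |f(y) − f(x)|^p |y − x|^{−(1+pε)} dy = +∞. Let a, b : [0,2π] → ℝ be measurable functions with finite Gagliardo seminorms |a|_{ε,p} and |b|_{ε,p} and with a bounded (or a ∈ L^p), satisfying b(x) = a(x) f(x) for a.e. x. Then a = 0 and b = 0 almost everywhere. -/
/-!
Subtracting `b = a f` at `x` and at `y` gives the Leibniz-type identity
`a(x) (f(y) - f(x)) = (a(x) - a(y)) f(y) + (b(y) - b(x))`.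
As `f` is bounded, taking `p`-th powers and integrating against the Gagliardo kernel bounds
`|a(x)|^p ∫ |f(y) - f(x)|^p |y - x|^(-1-pε) dy` by the inner Gagliardo integrals of `a` and `b`
at `x`, which are finite for almost every `x`. The integral of `f` diverges everywhere, so
`a(x) = 0` for almost every `x`, and then `b = a f = 0` almost everywhere.
-/

open Real MeasureTheory Set
open scoped ENNReal

section LeibnizBound

variable {α 𝕜 : Type*} [NormedRing 𝕜] [NormMulClass 𝕜] {a b f : α → 𝕜} {x y : α}

theorem enorm_mul_enorm_sub_le_of_eq_mul (hy : b y = a y * f y) (hx : b x = a x * f x) :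
    ‖a x‖ₑ * ‖f y - f x‖ₑ ≤ ‖a y - a x‖ₑ * ‖f y‖ₑ + ‖b y - b x‖ₑ := calc
  ‖a x‖ₑ * ‖f y - f x‖ₑ = ‖(a x - a y) * f y + (b y - b x)‖ₑ := by
    rw [← enorm_mul, hy, hx]; congr 1; noncomm_ring
  _ ≤ ‖a y - a x‖ₑ * ‖f y‖ₑ + ‖b y - b x‖ₑ := by
    rw [enorm_sub_rev (a y), ← enorm_mul]; exact enorm_add_le _ _

theorem enorm_rpow_mul_enorm_sub_rpow_le {p : ℝ} (hp : 1 ≤ p) {C : ℝ≥0∞} (hC : ‖f y‖ₑ ≤ C)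
    (hy : b y = a y * f y) (hx : b x = a x * f x) :
    ‖a x‖ₑ ^ p * ‖f y - f x‖ₑ ^ p ≤
      2 ^ (p - 1) * (C ^ p * ‖a y - a x‖ₑ ^ p + ‖b y - b x‖ₑ ^ p) := by
  have hp0 : 0 ≤ p := zero_le_one.trans hp
  calc ‖a x‖ₑ ^ p * ‖f y - f x‖ₑ ^ p = (‖a x‖ₑ * ‖f y - f x‖ₑ) ^ p :=
        (ENNReal.mul_rpow_of_nonneg _ _ hp0).symm
    _ ≤ (‖a y - a x‖ₑ * C + ‖b y - b x‖ₑ) ^ p := by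
        gcongr
        exact (enorm_mul_enorm_sub_le_of_eq_mul hy hx).trans (by gcongr)
    _ ≤ 2 ^ (p - 1) * ((‖a y - a x‖ₑ * C) ^ p + ‖b y - b x‖ₑ ^ p) :=
        ENNReal.rpow_add_le_mul_rpow_add_rpow _ _ hp
    _ = 2 ^ (p - 1) * (C ^ p * ‖a y - a x‖ₑ ^ p + ‖b y - b x‖ₑ ^ p) := by
        rw [ENNReal.mul_rpow_of_nonneg _ _ hp0, mul_comm (‖a y - a x‖ₑ ^ p)]

variable [MeasurableSpace α] {μ : Measure α} [MeasurableSpace 𝕜] [OpensMeasurableSpace 𝕜]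
  {p : ℝ} {C : ℝ≥0∞} {w : α → ℝ≥0∞}

theorem enorm_rpow_mul_lintegral_le (hp : 1 ≤ p) (ha : AEMeasurable a μ) (hw : AEMeasurable w μ)
    (hfC : ∀ᵐ y ∂μ, ‖f y‖ₑ ≤ C) (hab : ∀ᵐ y ∂μ, b y = a y * f y) (hx : b x = a x * f x) :
    ‖a x‖ₑ ^ p * ∫⁻ y, ‖f y - f x‖ₑ ^ p * w y ∂μ ≤
      2 ^ (p - 1) * (C ^ p * ∫⁻ y, ‖a y - a x‖ₑ ^ p * w y ∂μ +
        ∫⁻ y, ‖b y - b x‖ₑ ^ p * w y ∂μ) := by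
  have hA : AEMeasurable (fun y ↦ ‖a y - a x‖ₑ ^ p * w y) μ :=
    (((continuous_sub_right (a x)).enorm.measurable.comp_aemeasurable ha).pow_const p).mul hw
  calc ‖a x‖ₑ ^ p * ∫⁻ y, ‖f y - f x‖ₑ ^ p * w y ∂μ
      ≤ ∫⁻ y, ‖a x‖ₑ ^ p * (‖f y - f x‖ₑ ^ p * w y) ∂μ := lintegral_const_mul_le _ _
    _ ≤ ∫⁻ y, 2 ^ (p - 1) * (C ^ p * (‖a y - a x‖ₑ ^ p * w y) + ‖b y - b x‖ₑ ^ p * w y) ∂μ := by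
        refine lintegral_mono_ae ?_
        filter_upwards [hfC, hab] with y hfy hy
        calc ‖a x‖ₑ ^ p * (‖f y - f x‖ₑ ^ p * w y)
            = ‖a x‖ₑ ^ p * ‖f y - f x‖ₑ ^ p * w y := (mul_assoc _ _ _).symm
          _ ≤ 2 ^ (p - 1) * (C ^ p * ‖a y - a x‖ₑ ^ p + ‖b y - b x‖ₑ ^ p) * w y := by
              gcongr ?_ * _; exact enorm_rpow_mul_enorm_sub_rpow_le hp hfy hy hx
          _ = _ := by ring
    _ = _ := by
        rw [lintegral_const_mul' _ _ (by finiteness), lintegral_add_left' (hA.const_mul _),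
          lintegral_const_mul'' _ hA]

theorem eq_zero_of_lintegral_enorm_sub_rpow_mul_eq_top (hp : 1 ≤ p) (ha : AEMeasurable a μ)
    (hw : AEMeasurable w μ) (hC : C ≠ ∞) (hfC : ∀ᵐ y ∂μ, ‖f y‖ₑ ≤ C)
    (hab : ∀ᵐ y ∂μ, b y = a y * f y) (hx : b x = a x * f x)
    (haI : ∫⁻ y, ‖a y - a x‖ₑ ^ p * w y ∂μ < ∞) (hbI : ∫⁻ y, ‖b y - b x‖ₑ ^ p * w y ∂μ < ∞)
    (hfI : ∫⁻ y, ‖f y - f x‖ₑ ^ p * w y ∂μ = ∞) : a x = 0 := by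
  by_contra hax
  have hpos : ‖a x‖ₑ ^ p ≠ 0 := (ENNReal.rpow_pos (enorm_pos.2 hax) enorm_ne_top).ne'
  have hbound := enorm_rpow_mul_lintegral_le hp ha hw hfC hab hx
  rw [hfI, ENNReal.mul_top hpos] at hbound
  exact not_le.2 (by finiteness) hbound

end LeibnizBound

theorem ENNReal.ofReal_abs_rpow_div {p : ℝ} (hp : 0 ≤ p) (u k : ℝ) :
    ENNReal.ofReal (|u| ^ p / k) = ‖u‖ₑ ^ p * ENNReal.ofReal k⁻¹ := by
  rw [div_eq_mul_inv, ENNReal.ofReal_mul (by positivity),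
    ← ENNReal.ofReal_rpow_of_nonneg (abs_nonneg u) hp, Real.enorm_eq_ofReal_abs]

theorem stmt9_general (p ε : ℝ) (hp : 1 ≤ p)
    (f a b : ℝ → ℝ)
    (hfc : Continuous f)
    (hdiv : ∀ x ∈ Set.Icc (0:ℝ) (2 * π),
      ∫⁻ y in Set.Ioo (0:ℝ) (2 * π),
        ENNReal.ofReal (|f y - f x| ^ p / |y - x| ^ (1 + p * ε)) = ⊤)
    (ha : Measurable a) (hb : Measurable b)
    (haG : ∫⁻ x in Set.Ioo (0:ℝ) (2 * π), ∫⁻ y in Set.Ioo (0:ℝ) (2 * π),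
        ENNReal.ofReal (|a y - a x| ^ p / |y - x| ^ (1 + p * ε)) < ⊤)
    (hbG : ∫⁻ x in Set.Ioo (0:ℝ) (2 * π), ∫⁻ y in Set.Ioo (0:ℝ) (2 * π),
        ENNReal.ofReal (|b y - b x| ^ p / |y - x| ^ (1 + p * ε)) < ⊤)
    (hab : ∀ᵐ x ∂(volume.restrict (Set.Ioo (0:ℝ) (2 * π))), b x = a x * f x) :
    (∀ᵐ x ∂(volume.restrict (Set.Ioo (0:ℝ) (2 * π))), a x = 0) ∧
    (∀ᵐ x ∂(volume.restrict (Set.Ioo (0:ℝ) (2 * π))), b x = 0) := by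
  simp only [ENNReal.ofReal_abs_rpow_div (zero_le_one.trans hp)] at hdiv haG hbG
  obtain ⟨C, hC⟩ := (isCompact_Icc (a := 0) (b := 2 * π)).exists_bound_of_continuousOn
    hfc.continuousOn
  have hfC : ∀ᵐ y ∂(volume.restrict (Ioo (0:ℝ) (2 * π))), ‖f y‖ₑ ≤ ENNReal.ofReal C := by
    filter_upwards [ae_restrict_mem measurableSet_Ioo] with y hy
    rw [← ofReal_norm]
    exact ENNReal.ofReal_le_ofReal (hC y (Ioo_subset_Icc_self hy))
  have hinner (g : ℝ → ℝ) (hg : Measurable g)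
      (hG : ∫⁻ x in Ioo 0 (2 * π), ∫⁻ y in Ioo 0 (2 * π),
        ‖g y - g x‖ₑ ^ p * ENNReal.ofReal (|y - x| ^ (1 + p * ε))⁻¹ < ⊤) :
      ∀ᵐ x ∂(volume.restrict (Ioo (0:ℝ) (2 * π))), ∫⁻ y in Ioo 0 (2 * π),
        ‖g y - g x‖ₑ ^ p * ENNReal.ofReal (|y - x| ^ (1 + p * ε))⁻¹ < ⊤ :=
    ae_lt_top (Measurable.lintegral_prod_right (by fun_prop)) hG.ne
  have ha0 : ∀ᵐ x ∂(volume.restrict (Ioo (0:ℝ) (2 * π))), a x = 0 := by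
    filter_upwards [hinner a ha haG, hinner b hb hbG, hab, ae_restrict_mem measurableSet_Ioo]
      with x haI hbI hx hxI
    exact eq_zero_of_lintegral_enorm_sub_rpow_mul_eq_top hp ha.aemeasurable (by fun_prop)
      ENNReal.ofReal_ne_top hfC hab hx haI hbI (hdiv x (Ioo_subset_Icc_self hxI))
  refine ⟨ha0, ?_⟩
  filter_upwards [ha0, hab] with x hax hx
  rw [hx, hax, zero_mul]

/-- Separation property: if `f` is continuous, `2π`-periodic, and for every `x ∈ [0,2π]`
the integral `∫_0^{2π} |f y − f x|^p |y−x|^{−(1+pε)} dy` is infinite, and if `a, b` are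
measurable with `a ∈ L^p` and finite Gagliardo `W^{ε,p}` seminorms on `(0,2π)`, and
`b = a f` a.e., then `a = 0` and `b = 0` a.e. on `(0,2π)`. -/
theorem stmt9 (p ε : ℝ) (hp : 1 ≤ p) (hε : 0 < ε) (hε1 : ε < 1)
    (f a b : ℝ → ℝ)
    (hfc : Continuous f) (hfper : ∀ x, f (x + 2 * π) = f x)
    (hdiv : ∀ x ∈ Set.Icc (0:ℝ) (2 * π),
      ∫⁻ y in Set.Ioo (0:ℝ) (2 * π),
        ENNReal.ofReal (|f y - f x| ^ p / |y - x| ^ (1 + p * ε)) = ⊤)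
    (ha : Measurable a) (hb : Measurable b)
    (haLp : ∫⁻ x in Set.Ioo (0:ℝ) (2 * π), ENNReal.ofReal (|a x| ^ p) < ⊤)
    (haG : ∫⁻ x in Set.Ioo (0:ℝ) (2 * π), ∫⁻ y in Set.Ioo (0:ℝ) (2 * π),
        ENNReal.ofReal (|a y - a x| ^ p / |y - x| ^ (1 + p * ε)) < ⊤)
    (hbG : ∫⁻ x in Set.Ioo (0:ℝ) (2 * π), ∫⁻ y in Set.Ioo (0:ℝ) (2 * π),
        ENNReal.ofReal (|b y - b x| ^ p / |y - x| ^ (1 + p * ε)) < ⊤)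
    (hab : ∀ᵐ x ∂(volume.restrict (Set.Ioo (0:ℝ) (2 * π))), b x = a x * f x) :
    (∀ᵐ x ∂(volume.restrict (Set.Ioo (0:ℝ) (2 * π))), a x = 0) ∧
    (∀ᵐ x ∂(volume.restrict (Set.Ioo (0:ℝ) (2 * π))), b x = 0) :=
  stmt9_general p ε hp f a b hfc hdiv ha hb haG hbG hab
end

section
/- Let f(x) = ∑_{k=1}^∞ a_k sin(b_k x) with a_k = q^{-k}, b_k = 2^{q^k} for sufficiently large integer q. Then for every x ∈ [0, 2π], every ε ∈ (0,1) and every p ∈ [1, ∞), ∫_0^{2π} |f(y) − f(x)|^p / |y − x|^{1+pε} dy = +∞. In particular, f belongs to no Sobolev–Slobodeckij space W^{ε,p}(0,2π) with ε > 0. -/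
/-!
At the frequency `b_m = 2 ^ q ^ (m + 1)` the `m`-th term `a_m sin (b_m y)` dominates the increment
`f y - f x`: on an interval of length `1 / (4 b_m)` at distance between `1 / b_m` and `5 / b_m`
from `x` it contributes at least `a_m / 4`, while the lower terms (which are Lipschitz with total
constant at most `a_m b_m / 40`) contribute at most `a_m / 8` and the tail at most `a_m / 20`.
The integral over that interval alone is therefore at least `(a_m (b_m / 5) ^ ε / 16) ^ p / 20`,
and `a_m b_m ^ ε = q ^ (-(m + 1)) 2 ^ (ε q ^ (m + 1))` tends to infinity with `m`.
-/

open Real MeasureTheory Set Filter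

lemma exists_quarter_le_abs_sin_add_sub_sin (θ : ℝ) :
    ∃ t₀, 1 ≤ t₀ ∧ t₀ + 1 / 4 ≤ 5 ∧
      ∀ t ∈ Icc t₀ (t₀ + 1 / 4), 1 / 4 ≤ |sin (θ + t) - sin θ| := by
  have hπ₁ := pi_gt_three
  have hπ₂ := pi_lt_d2
  suffices h : ∃ t₀, 1 ≤ t₀ ∧ t₀ + 1 / 4 ≤ 5 ∧ 1 / 2 ≤ |sin (θ + t₀) - sin θ| by
    obtain ⟨t₀, h1, h5, ht₀⟩ := h
    refine ⟨t₀, h1, h5, fun t ht => ?_⟩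
    have hdist : |θ + t₀ - (θ + t)| ≤ 1 / 4 := by
      rw [abs_le]; constructor <;> linarith [ht.1, ht.2]
    have hlip := abs_sin_sub_sin_le (θ + t₀) (θ + t)
    have htri := abs_sub_abs_le_abs_sub (sin (θ + t₀) - sin θ) (sin (θ + t) - sin θ)
    rw [sub_sub_sub_cancel_right] at htri
    linarith
  -- `sin (θ + π/2) - sin θ = cos θ - sin θ` and `sin (θ + 3π/2) - sin θ = -cos θ - sin θ`
  -- have squares summing to `2`, so they cannot both be smaller than `1/2`.
  by_cases hc : 1 / 2 ≤ |cos θ - sin θ|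
  · exact ⟨π / 2, by linarith, by linarith, by rwa [sin_add_pi_div_two]⟩
  refine ⟨3 * π / 2, by linarith, by linarith, ?_⟩
  have h3 : sin (θ + 3 * π / 2) = -cos θ := by
    rw [show θ + 3 * π / 2 = θ + π / 2 + π by ring, sin_add_pi, sin_add_pi_div_two]
  rw [h3]
  by_contra! hs
  have h1 := sq_lt_sq' (abs_lt.1 (not_le.1 hc)).1 (abs_lt.1 (not_le.1 hc)).2
  have h2 := sq_lt_sq' (abs_lt.1 hs).1 (abs_lt.1 hs).2
  nlinarith [sin_sq_add_cos_sq θ]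

lemma exists_Icc_right_le_abs_sin_mul_sub {B : ℝ} (hB : 0 < B) (x : ℝ) :
    ∃ lo, x + 1 / B ≤ lo ∧ lo + 1 / (4 * B) ≤ x + 5 / B ∧
      ∀ y ∈ Icc lo (lo + 1 / (4 * B)), 1 / 4 ≤ |sin (B * y) - sin (B * x)| := by
  obtain ⟨t₀, h1, h5, ht⟩ := exists_quarter_le_abs_sin_add_sub_sin (B * x)
  have hlen : x + t₀ / B + 1 / (4 * B) = x + (t₀ + 1 / 4) / B := by field_simp; ring
  refine ⟨x + t₀ / B, by gcongr, ?_, fun y hy => ?_⟩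
  · rw [hlen]; gcongr
  rw [hlen, mem_Icc] at hy
  have hy₁ : t₀ ≤ B * (y - x) := by
    rw [mul_comm, ← div_le_iff₀ hB]; linarith
  have hy₂ : B * (y - x) ≤ t₀ + 1 / 4 := by
    rw [mul_comm, ← le_div_iff₀ hB]; linarith
  have := ht _ ⟨hy₁, hy₂⟩
  rwa [mul_sub, add_sub_cancel] at this

lemma exists_Icc_subset_Ioo_le_abs_sin_mul_sub {B : ℝ} (hB : 2 ≤ B) {x : ℝ}
    (hx : x ∈ Icc 0 (2 * π)) :
    ∃ lo, Icc lo (lo + 1 / (4 * B)) ⊆ Ioo 0 (2 * π) ∧ ∀ y ∈ Icc lo (lo + 1 / (4 * B)),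
      1 / B ≤ |y - x| ∧ |y - x| ≤ 5 / B ∧ 1 / 4 ≤ |sin (B * y) - sin (B * x)| := by
  have hB₀ : 0 < B := by linarith
  have h₁ : 0 < 1 / B := by positivity
  have h₅ : 5 / B < π := by
    have := pi_gt_three
    have : 5 / B ≤ 5 / 2 := by gcongr
    linarith
  obtain ⟨hx₀, hx₂⟩ := hx
  rcases le_or_gt x π with hxπ | hxπ
  · obtain ⟨lo, hlo, hhi, hsin⟩ := exists_Icc_right_le_abs_sin_mul_sub hB₀ x
    refine ⟨lo, fun y hy => ⟨?_, ?_⟩, fun y hy => ?_⟩ <;> obtain ⟨hy₁, hy₂⟩ := hy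
    · linarith
    · linarith
    rw [abs_of_nonneg (by linarith)]
    exact ⟨by linarith, by linarith, hsin y ⟨hy₁, hy₂⟩⟩
  -- For `x > π` there is no room on the right: reflect the right-hand window of `-x`.
  · obtain ⟨lo, hlo, hhi, hsin⟩ := exists_Icc_right_le_abs_sin_mul_sub hB₀ (-x)
    refine ⟨-(lo + 1 / (4 * B)), fun y hy => ⟨?_, ?_⟩, fun y hy => ?_⟩ <;> obtain ⟨hy₁, hy₂⟩ := hy
    · linarith
    · linarith
    rw [abs_of_nonpos (by linarith)]
    have := hsin (-y) ⟨by linarith, by linarith⟩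
    rw [mul_neg, mul_neg, sin_neg, sin_neg, neg_sub_neg, abs_sub_comm] at this
    exact ⟨by linarith, by linarith, this⟩

noncomputable def sineSeries (a b : ℕ → ℝ) (y : ℝ) : ℝ := ∑' k, a k * sin (b k * y)

section SineSeries

variable {a : ℕ → ℝ} (b : ℕ → ℝ)

lemma summable_mul_sin (ha₀ : ∀ k, 0 ≤ a k) (ha : Summable a) (y : ℝ) :
    Summable fun k => a k * sin (b k * y) :=
  ha.of_norm_bounded fun k => by
    rw [norm_mul, Real.norm_of_nonneg (ha₀ k)]
    exact mul_le_of_le_one_right (ha₀ k) (abs_sin_le_one _)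

lemma sub_le_abs_sineSeries_sub (ha₀ : ∀ k, 0 ≤ a k) (ha : Summable a) (m : ℕ) (x y : ℝ) :
    a m * |sin (b m * y) - sin (b m * x)| - (∑ k ∈ Finset.range m, a k * |b k|) * |y - x|
      - 2 * ∑' k, a (k + (m + 1)) ≤ |sineSeries a b y - sineSeries a b x| := by
  set g : ℕ → ℝ := fun k => a k * (sin (b k * y) - sin (b k * x))
  set low := ∑ k ∈ Finset.range m, g k
  set tail := ∑' k, g (k + (m + 1))
  have hg : Summable g := by
    simpa only [g, mul_sub] using (summable_mul_sin b ha₀ ha y).sub (summable_mul_sin b ha₀ ha x)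
  have hsplit : sineSeries a b y - sineSeries a b x = low + g m + tail := by
    rw [← Finset.sum_range_succ, hg.sum_add_tsum_nat_add (m + 1), sineSeries, sineSeries,
      ← (summable_mul_sin b ha₀ ha y).tsum_sub (summable_mul_sin b ha₀ ha x)]
    simp only [g, mul_sub]
  have hlow : |low| ≤ (∑ k ∈ Finset.range m, a k * |b k|) * |y - x| := by
    rw [Finset.sum_mul]
    refine (Finset.abs_sum_le_sum_abs _ _).trans (Finset.sum_le_sum fun k _ => ?_)
    rw [abs_mul, abs_of_nonneg (ha₀ k), mul_assoc]
    refine mul_le_mul_of_nonneg_left ?_ (ha₀ k)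
    calc |sin (b k * y) - sin (b k * x)| ≤ |b k * y - b k * x| := abs_sin_sub_sin_le _ _
      _ = |b k| * |y - x| := by rw [← mul_sub, abs_mul]
  have htail : |tail| ≤ 2 * ∑' k, a (k + (m + 1)) := by
    rw [← Real.norm_eq_abs, ← tsum_mul_left]
    refine tsum_of_norm_bounded (f := fun k => g (k + (m + 1)))
      (((summable_nat_add_iff (m + 1)).2 ha).mul_left 2).hasSum fun k => ?_
    rw [Real.norm_eq_abs, abs_mul, abs_of_nonneg (ha₀ _), mul_comm]
    refine mul_le_mul_of_nonneg_right ?_ (ha₀ _)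
    have hy := abs_sin_le_one (b (k + (m + 1)) * y)
    have hx := abs_sin_le_one (b (k + (m + 1)) * x)
    exact (abs_sub _ _).trans (by linarith)
  have hmid : |g m| = a m * |sin (b m * y) - sin (b m * x)| := by
    rw [abs_mul, abs_of_nonneg (ha₀ m)]
  have htri : |g m| ≤ |low + g m + tail| + |low| + |tail| := by
    have := abs_add_three (low + g m + tail) (-low) (-tail)
    rwa [show low + g m + tail + -low + -tail = g m by ring, abs_neg, abs_neg] at this
  rw [hsplit]
  linarith

end SineSeries

lemma ofReal_mul_le_setLIntegral_of_le_on_Icc {g : ℝ → ENNReal} {U : Set ℝ} {lo ℓ c : ℝ}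
    (hc : 0 ≤ c) (hU : Icc lo (lo + ℓ) ⊆ U) (hg : ∀ y ∈ Icc lo (lo + ℓ), ENNReal.ofReal c ≤ g y) :
    ENNReal.ofReal (c * ℓ) ≤ ∫⁻ y in U, g y :=
  calc ENNReal.ofReal (c * ℓ) = ∫⁻ _ in Icc lo (lo + ℓ), ENNReal.ofReal c := by
        rw [setLIntegral_const, Real.volume_Icc, ← ENNReal.ofReal_mul hc, add_sub_cancel_left]
    _ ≤ ∫⁻ y in Icc lo (lo + ℓ), g y := setLIntegral_mono' measurableSet_Icc hg
    _ ≤ ∫⁻ y in U, g y := lintegral_mono_set hU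

lemma ofReal_le_lintegral_sineSeries {a b : ℕ → ℝ} (ha₀ : ∀ k, 0 ≤ a k) (ha : Summable a)
    {m : ℕ} (hb : 2 ≤ b m) (hlow : ∑ k ∈ Finset.range m, a k * |b k| ≤ a m * b m / 40)
    (htail : ∑' k, a (k + (m + 1)) ≤ a m / 40) {x : ℝ} (hx : x ∈ Icc 0 (2 * π)) {ε p : ℝ}
    (hε : 0 ≤ ε) (hp : 0 ≤ p) :
    ENNReal.ofReal ((a m / 16 * (b m / 5) ^ ε) ^ p / 20) ≤
      ∫⁻ y in Ioo 0 (2 * π),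
        ENNReal.ofReal (|sineSeries a b y - sineSeries a b x| ^ p / |y - x| ^ (1 + p * ε)) := by
  have hb₀ : 0 < b m := by linarith
  have ham : 0 ≤ a m / 16 := by linarith [ha₀ m]
  obtain ⟨lo, hsub, hlo⟩ := exists_Icc_subset_Ioo_le_abs_sin_mul_sub hb hx
  have hpt : ∀ y ∈ Icc lo (lo + 1 / (4 * b m)),
      ENNReal.ofReal ((a m / 16) ^ p / (5 / b m) ^ (1 + p * ε)) ≤
        ENNReal.ofReal (|sineSeries a b y - sineSeries a b x| ^ p / |y - x| ^ (1 + p * ε)) := by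
    intro y hy
    obtain ⟨h₁, h₅, hsin⟩ := hlo y hy
    have hlow' : (∑ k ∈ Finset.range m, a k * |b k|) * |y - x| ≤ a m / 8 :=
      calc _ ≤ a m * b m / 40 * (5 / b m) :=
            mul_le_mul hlow h₅ (abs_nonneg _) (by have := ha₀ m; positivity)
        _ = a m / 8 := by field_simp; ring
    have hF : a m / 16 ≤ |sineSeries a b y - sineSeries a b x| := by
      nlinarith [sub_le_abs_sineSeries_sub b ha₀ ha m x y, mul_le_mul_of_nonneg_left hsin (ha₀ m)]
    have hyx : 0 < |y - x| := lt_of_lt_of_le (by positivity) h₁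
    gcongr
  have hB5 : 0 < b m / 5 := by positivity
  have hK : (a m / 16) ^ p / (5 / b m) ^ (1 + p * ε) * (1 / (4 * b m))
      = (a m / 16 * (b m / 5) ^ ε) ^ p / 20 := by
    rw [div_eq_mul_inv, ← inv_rpow (by positivity), inv_div, rpow_add hB5, rpow_one,
      mul_comm p ε, rpow_mul hB5.le, mul_rpow ham (by positivity)]
    field_simp
    ring
  rw [← hK]
  exact ofReal_mul_le_setLIntegral_of_le_on_Icc (by positivity) hsub hpt

lemma forty_mul_pow_mul_two_pow_le {q : ℕ} (hq : 16 ≤ q) (m : ℕ) :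
    40 * m * q ^ (m + 1) * 2 ^ q ^ m ≤ 2 ^ q ^ (m + 1) := by
  rcases Nat.eq_zero_or_pos m with rfl | hm
  · simp
  have hqN : q ≤ q ^ m := Nat.le_self_pow hm.ne' q
  have hmN : m ≤ q ^ m := (Nat.lt_pow_self (by omega)).le
  calc 40 * m * q ^ (m + 1) * 2 ^ q ^ m = 40 * m * q * q ^ m * 2 ^ q ^ m := by ring
    _ ≤ 2 ^ 6 * 2 ^ q ^ m * 2 ^ q * 2 ^ q ^ m * 2 ^ q ^ m := by
        gcongr ?_ * ?_ * ?_ * ?_ * _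
        · norm_num
        · exact hmN.trans Nat.lt_two_pow_self.le
        · exact Nat.lt_two_pow_self.le
        · exact Nat.lt_two_pow_self.le
    _ = 2 ^ (6 + q + 3 * q ^ m) := by ring
    _ ≤ 2 ^ q ^ (m + 1) := by
        rw [pow_succ]
        exact Nat.pow_le_pow_right (by norm_num) (by nlinarith)

noncomputable def lacunaryAmp (q k : ℕ) : ℝ := ((q : ℝ) ^ (k + 1))⁻¹

noncomputable def lacunaryFreq (q k : ℕ) : ℝ := 2 ^ q ^ (k + 1)

lemma lacunaryAmp_nonneg (q k : ℕ) : 0 ≤ lacunaryAmp q k := by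
  rw [lacunaryAmp]; positivity

lemma two_le_lacunaryFreq {q : ℕ} (hq : 1 ≤ q) (k : ℕ) : 2 ≤ lacunaryFreq q k :=
  le_self_pow₀ one_le_two (pow_pos hq _).ne'

lemma summable_lacunaryAmp {q : ℕ} (hq : 2 ≤ q) : Summable (lacunaryAmp q) := by
  have hq₁ : (1 : ℝ) < q := by exact_mod_cast hq
  refine ((summable_geometric_of_lt_one (by positivity) (inv_lt_one_of_one_lt₀ hq₁)).mul_left
    (q : ℝ)⁻¹).congr fun k => ?_
  rw [lacunaryAmp, pow_succ', mul_inv, inv_pow]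

lemma sum_lacunaryAmp_mul_lacunaryFreq_le {q : ℕ} (hq : 16 ≤ q) (m : ℕ) :
    ∑ k ∈ Finset.range m, lacunaryAmp q k * |lacunaryFreq q k| ≤
      lacunaryAmp q m * lacunaryFreq q m / 40 := by
  have hq₁ : (1 : ℝ) ≤ q := by exact_mod_cast (by omega : 1 ≤ q)
  calc ∑ k ∈ Finset.range m, lacunaryAmp q k * |lacunaryFreq q k|
      ≤ ∑ k ∈ Finset.range m, (2 : ℝ) ^ q ^ m := Finset.sum_le_sum fun k hk => by
        rw [lacunaryAmp, lacunaryFreq, abs_of_pos (by positivity)]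
        refine (mul_le_of_le_one_left (by positivity)
          (inv_le_one_of_one_le₀ (one_le_pow₀ hq₁))).trans (pow_le_pow_right₀ one_le_two
          (Nat.pow_le_pow_right (by omega) (Finset.mem_range.1 hk)))
    _ = m * 2 ^ q ^ m := by simp
    _ ≤ lacunaryAmp q m * lacunaryFreq q m / 40 := by
        rw [lacunaryAmp, lacunaryFreq, inv_mul_eq_div, div_div, le_div_iff₀ (by positivity)]
        have : ((40 * m * q ^ (m + 1) * 2 ^ q ^ m : ℕ) : ℝ) ≤ ((2 ^ q ^ (m + 1) : ℕ) : ℝ) := by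
          exact_mod_cast forty_mul_pow_mul_two_pow_le hq m
        push_cast at this
        linarith

lemma tsum_lacunaryAmp_tail_le {q : ℕ} (hq : 41 ≤ q) (m : ℕ) :
    ∑' k, lacunaryAmp q (k + (m + 1)) ≤ lacunaryAmp q m / 40 := by
  have hq₀ : (41 : ℝ) ≤ q := by exact_mod_cast hq
  have hterm : ∀ k,
      lacunaryAmp q (k + (m + 1)) = lacunaryAmp q m * (q : ℝ)⁻¹ * (q : ℝ)⁻¹ ^ k := by
    intro k
    rw [lacunaryAmp, lacunaryAmp, ← inv_pow, ← inv_pow, ← pow_succ, ← pow_add]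
    ring_nf
  rw [tsum_congr hterm, tsum_mul_left, tsum_geometric_of_lt_one (by positivity)
    (inv_lt_one_of_one_lt₀ (by linarith))]
  have hgeom : (q : ℝ)⁻¹ * (1 - (q : ℝ)⁻¹)⁻¹ = 1 / (q - 1) := by
    field_simp
  rw [mul_assoc, hgeom, div_eq_mul_one_div (lacunaryAmp q m)]
  exact mul_le_mul_of_nonneg_left (one_div_le_one_div_of_le (by norm_num) (by linarith))
    (lacunaryAmp_nonneg q m)

lemma tendsto_lacunaryAmp_mul_lacunaryFreq_rpow {q : ℕ} (hq : 2 ≤ q) {ε : ℝ} (hε : 0 < ε) :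
    Tendsto (fun m => lacunaryAmp q m / 16 * (lacunaryFreq q m / 5) ^ ε) atTop atTop := by
  have hq₁ : (1 : ℝ) < q := by exact_mod_cast hq
  have hexp := (tendsto_exp_mul_div_rpow_atTop 1 (ε * log 2) (by positivity)).atTop_mul_const
    (r := (16 * 5 ^ ε)⁻¹) (by positivity)
  have hN := (tendsto_pow_atTop_atTop_of_one_lt hq₁).comp (tendsto_add_atTop_nat 1)
  refine (hexp.comp hN).congr fun m => ?_
  have h2 : ((2 : ℝ) ^ q ^ (m + 1)) ^ ε = exp (ε * log 2 * (q : ℝ) ^ (m + 1)) := by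
    rw [← rpow_natCast, ← rpow_mul (by norm_num), rpow_def_of_pos (by norm_num)]
    push_cast
    ring_nf
  simp only [Function.comp, rpow_one, lacunaryAmp, lacunaryFreq]
  rw [div_rpow (by positivity) (by norm_num), h2]
  field_simp

/-- For sufficiently large integer `q`, the lacunary series
`f x = ∑_{k≥1} q⁻ᵏ sin (2^(q^k) x)` satisfies, for every `x ∈ [0,2π]`, every
`ε ∈ (0,1)` and every `p ∈ [1,∞)`,
`∫_0^{2π} |f y − f x|^p / |y − x|^{1+pε} dy = +∞`;
in particular `f` belongs to no space `W^{ε,p}(0,2π)` with `ε > 0`. -/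
theorem stmt10 :
    ∃ q₀ : ℕ, ∀ q : ℕ, q₀ ≤ q →
      ∀ x ∈ Set.Icc (0:ℝ) (2 * π), ∀ ε : ℝ, 0 < ε → ε < 1 → ∀ p : ℝ, 1 ≤ p →
        ∫⁻ y in Set.Ioo (0:ℝ) (2 * π),
          ENNReal.ofReal
            ((|(∑' k : ℕ, ((q : ℝ) ^ (k + 1))⁻¹ * Real.sin (((2:ℝ) ^ (q ^ (k + 1))) * y)) -
               (∑' k : ℕ, ((q : ℝ) ^ (k + 1))⁻¹ * Real.sin (((2:ℝ) ^ (q ^ (k + 1))) * x))|) ^ p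
              / |y - x| ^ (1 + p * ε)) = ⊤ := by
  refine ⟨41, fun q hq x hx ε hε₀ _ p hp => ENNReal.eq_top_of_forall_nnreal_le fun M => ?_⟩
  obtain ⟨m, hm⟩ := ((tendsto_lacunaryAmp_mul_lacunaryFreq_rpow (by omega : 2 ≤ q)
    hε₀).eventually_ge_atTop (max 1 (20 * M))).exists
  set z := lacunaryAmp q m / 16 * (lacunaryFreq q m / 5) ^ ε
  have hz : 20 * (M : ℝ) ≤ z ^ p :=
    (le_max_right _ _).trans (hm.trans (self_le_rpow_of_one_le ((le_max_left _ _).trans hm) hp))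
  calc (M : ENNReal) = ENNReal.ofReal (20 * M / 20) := by
        rw [mul_div_cancel_left₀ _ (by norm_num), ENNReal.ofReal_coe_nnreal]
    _ ≤ ENNReal.ofReal (z ^ p / 20) := by gcongr
    _ ≤ _ := ofReal_le_lintegral_sineSeries (lacunaryAmp_nonneg q) (summable_lacunaryAmp (by omega))
        (two_le_lacunaryFreq (by omega) m) (sum_lacunaryAmp_mul_lacunaryFreq_le (by omega) m)
        (tsum_lacunaryAmp_tail_le hq m) hx hε₀.le (by linarith)
end

section
/- Let u = (u₁, u₂) be functions on the boundary curve {(F(θ)cos θ, F(θ)sin θ)} whose pullbacks θ ↦ u_j(F(θ)cos θ, F(θ)sin θ) lie in W^{ε,p}(𝕋) for some ε ∈ (0,1), p ≥ 1. If the normal component n·u vanishes identically on the boundary, where n is as above with f = F' the separating function, then u₁ = u₂ = 0 on the boundary. -/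
open Real MeasureTheory Set Filter Topology
open scoped ENNReal NNReal

/-!
Put `g = u₁ cos θ + u₂ sin θ` and `A = u₂ cos θ - u₁ sin θ`; the vanishing of the normal
component is the identity `A f = g F`. Sums, and products with `C¹` functions, stay in `W^{ε,p}`
of a bounded interval: the Gagliardo seminorm of `a φ` is controlled by that of `a` and by
`‖a‖ₚ`, because `∫ |y - x| ^ (p - 1 - p ε) dy` is bounded uniformly in `x` when `ε < 1`. So the
separation property applies to `(A, g F)` and gives `A = 0`, `g F = 0` a.e. The zeros of `F`
at which `f = F' ≠ 0` are isolated, hence countable, so `g = 1_{f = 0} g` a.e.; since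
`1_{f = 0} g · f = 0`, a second use of the separation property gives `g = 0`, and `u = 0` because
`(cos θ, sin θ)` and `(-sin θ, cos θ)` form a basis.
-/

theorem rpow_abs_add_le {p : ℝ} (hp : 0 ≤ p) (u v : ℝ) :
    |u + v| ^ p ≤ 2 ^ p * (|u| ^ p + |v| ^ p) := by
  calc |u + v| ^ p ≤ (2 * max |u| |v|) ^ p := by
        gcongr; linarith [abs_add_le u v, le_max_left |u| |v|, le_max_right |u| |v|]
    _ = 2 ^ p * max |u| |v| ^ p := mul_rpow zero_le_two (le_max_of_le_left (abs_nonneg u))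
    _ ≤ 2 ^ p * (|u| ^ p + |v| ^ p) := by
        gcongr
        rcases max_choice |u| |v| with h | h <;> rw [h] <;> simp [rpow_nonneg]

theorem rpow_abs_mul_sub_mul_div_le {p q C K a₀ a₁ φ₀ φ₁ d : ℝ} (hp : 0 ≤ p) (hd : 0 < d)
    (hC : |φ₁| ≤ C) (hK : |φ₁ - φ₀| ≤ K * d) :
    |a₁ * φ₁ - a₀ * φ₀| ^ p / d ^ q ≤
      2 ^ p * (C ^ p + K ^ p) * (|a₁ - a₀| ^ p / d ^ q + |a₀| ^ p * d ^ (p - q)) := by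
  have hC0 : 0 ≤ C := (abs_nonneg _).trans hC
  have hK0 : 0 ≤ K := nonneg_of_mul_nonneg_left ((abs_nonneg _).trans hK) hd
  have hu : |(a₁ - a₀) * φ₁| ^ p ≤ C ^ p * |a₁ - a₀| ^ p := by
    rw [abs_mul, mul_rpow (abs_nonneg _) (abs_nonneg _), mul_comm]; gcongr
  have hv : |a₀ * (φ₁ - φ₀)| ^ p ≤ K ^ p * (|a₀| ^ p * d ^ p) := by
    have hKd : |φ₁ - φ₀| ^ p ≤ K ^ p * d ^ p :=
      (rpow_le_rpow (abs_nonneg _) hK hp).trans_eq (mul_rpow hK0 hd.le)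
    rw [abs_mul, mul_rpow (abs_nonneg _) (abs_nonneg _)]
    exact (mul_le_mul_of_nonneg_left hKd (by positivity)).trans_eq (by ring)
  have hX : 0 ≤ |a₁ - a₀| ^ p / d ^ q := by positivity
  have hY : 0 ≤ |a₀| ^ p * d ^ (p - q) := by positivity
  calc |a₁ * φ₁ - a₀ * φ₀| ^ p / d ^ q
      = |(a₁ - a₀) * φ₁ + a₀ * (φ₁ - φ₀)| ^ p / d ^ q := by ring_nf
    _ ≤ 2 ^ p * (C ^ p * |a₁ - a₀| ^ p + K ^ p * (|a₀| ^ p * d ^ p)) / d ^ q := by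
        gcongr
        exact (rpow_abs_add_le hp _ _).trans (by gcongr)
    _ = 2 ^ p * (C ^ p * (|a₁ - a₀| ^ p / d ^ q) + K ^ p * (|a₀| ^ p * d ^ (p - q))) := by
        rw [rpow_sub hd]; field_simp
    _ ≤ 2 ^ p * (C ^ p + K ^ p) * (|a₁ - a₀| ^ p / d ^ q + |a₀| ^ p * d ^ (p - q)) := by
        rw [mul_assoc]; gcongr
        nlinarith [rpow_nonneg hC0 p, rpow_nonneg hK0 p]

theorem ENNReal.ofReal_le_ofReal_mul_add {x y z c : ℝ} (hc : 0 ≤ c) (hy : 0 ≤ y) (hz : 0 ≤ z)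
    (h : x ≤ c * (y + z)) :
    ENNReal.ofReal x ≤ ENNReal.ofReal c * (ENNReal.ofReal y + ENNReal.ofReal z) := by
  rw [← ENNReal.ofReal_add hy hz, ← ENNReal.ofReal_mul hc]
  exact ENNReal.ofReal_le_ofReal h

theorem lintegral_lt_top_of_ae_le_mul_add {α : Type*} [MeasurableSpace α] {μ : Measure α}
    {f g h : α → ℝ≥0∞} {c : ℝ≥0∞} (hc : c ≠ ⊤) (hg : AEMeasurable g μ)
    (hfgh : ∀ᵐ z ∂μ, f z ≤ c * (g z + h z)) (hgi : ∫⁻ z, g z ∂μ < ⊤) (hhi : ∫⁻ z, h z ∂μ < ⊤) :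
    ∫⁻ z, f z ∂μ < ⊤ :=
  calc ∫⁻ z, f z ∂μ ≤ ∫⁻ z, c * (g z + h z) ∂μ := lintegral_mono_ae hfgh
    _ = c * (∫⁻ z, g z ∂μ + ∫⁻ z, h z ∂μ) := by
        rw [lintegral_const_mul' _ _ hc, lintegral_add_left' hg]
    _ < ⊤ := ENNReal.mul_lt_top hc.lt_top (ENNReal.add_lt_top.2 ⟨hgi, hhi⟩)

theorem lintegral_ball_abs_rpow_lt_top {σ : ℝ} (hσ : -1 < σ) (r : ℝ) :
    ∫⁻ t in Metric.ball 0 r, ENNReal.ofReal (|t| ^ σ) < ⊤ := by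
  refine Integrable.lintegral_lt_top (integrableOn_ball_of_norm_le_rpow (C := 1) (α := -σ)
    (by simp) (by simp; linarith) (Eventually.of_forall fun t => ?_)
    (measurable_abs.pow_const σ).aestronglyMeasurable)
  simp [abs_rpow_of_nonneg (abs_nonneg t)]

theorem exists_lintegral_abs_sub_rpow_le {s : Set ℝ} (hs : MeasurableSet s)
    (hsb : Bornology.IsBounded s) {σ : ℝ} (hσ : -1 < σ) :
    ∃ M ≠ ⊤, ∀ x ∈ s, ∫⁻ y in s, ENNReal.ofReal (|y - x| ^ σ) ≤ M := by
  obtain ⟨R, hR⟩ := hsb.subset_closedBall 0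
  set h := (Metric.ball (0 : ℝ) (2 * R + 1)).indicator fun t => ENNReal.ofReal (|t| ^ σ) with hh
  refine ⟨∫⁻ t, h t, ?_, fun x hx => ?_⟩
  · rw [lintegral_indicator measurableSet_ball]
    exact (lintegral_ball_abs_rpow_lt_top hσ _).ne
  have hxR : |x| ≤ R := by simpa using hR hx
  calc ∫⁻ y in s, ENNReal.ofReal (|y - x| ^ σ) = ∫⁻ y in s, h (y - x) := by
        refine setLIntegral_congr_fun hs fun y hy => ?_
        have hyR : |y| ≤ R := by simpa using hR hy
        have hyx : y - x ∈ Metric.ball 0 (2 * R + 1) := by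
          rw [mem_ball_zero_iff, Real.norm_eq_abs]; linarith [abs_sub y x]
        rw [hh, indicator_of_mem hyx]
    _ ≤ ∫⁻ y, h (y - x) := setLIntegral_le_lintegral _ _
    _ = ∫⁻ t, h t := lintegral_sub_right_eq_self h x

theorem lintegral_prod_mul_abs_sub_rpow_lt_top {s : Set ℝ} (hs : MeasurableSet s)
    (hsb : Bornology.IsBounded s) {σ : ℝ} (hσ : -1 < σ) {w : ℝ → ℝ≥0∞} (hw : Measurable w)
    (hwi : ∫⁻ x in s, w x < ⊤) :
    ∫⁻ z, w z.1 * ENNReal.ofReal (|z.2 - z.1| ^ σ)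
      ∂((volume.restrict s).prod (volume.restrict s)) < ⊤ := by
  obtain ⟨M, hM, hxM⟩ := exists_lintegral_abs_sub_rpow_le hs hsb hσ
  have hmeas : ∀ x : ℝ, Measurable fun y : ℝ => ENNReal.ofReal (|y - x| ^ σ) := fun x => by
    fun_prop
  rw [lintegral_prod _ (by fun_prop)]
  calc ∫⁻ x in s, ∫⁻ y in s, w x * ENNReal.ofReal (|y - x| ^ σ)
      = ∫⁻ x in s, w x * ∫⁻ y in s, ENNReal.ofReal (|y - x| ^ σ) := by
        simp_rw [lintegral_const_mul _ (hmeas _)]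
    _ ≤ ∫⁻ x in s, w x * M := setLIntegral_mono' hs fun x hx => by gcongr; exact hxM x hx
    _ = (∫⁻ x in s, w x) * M := lintegral_mul_const' _ _ hM
    _ < ⊤ := ENNReal.mul_lt_top hwi hM.lt_top

noncomputable def gagliardoKernel (p ε : ℝ) (a : ℝ → ℝ) (z : ℝ × ℝ) : ℝ≥0∞ :=
  ENNReal.ofReal (|a z.2 - a z.1| ^ p / |z.2 - z.1| ^ (1 + p * ε))

/-- Membership in the fractional Sobolev space `W^{ε,p}(s)`: `a ∈ Lᵖ(s)` with finite
Gagliardo seminorm. -/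
structure MemFracSobolev (p ε : ℝ) (s : Set ℝ) (a : ℝ → ℝ) : Prop where
  measurable : Measurable a
  lintegral_lt_top : ∫⁻ x in s, ENNReal.ofReal (|a x| ^ p) < ⊤
  gagliardo_lt_top : ∫⁻ x in s, ∫⁻ y in s, gagliardoKernel p ε a (x, y) < ⊤

section FracSobolev

variable {p ε : ℝ} {s : Set ℝ} {a b : ℝ → ℝ}

theorem measurable_gagliardoKernel (ha : Measurable a) :
    Measurable (gagliardoKernel p ε a) := by
  unfold gagliardoKernel; fun_prop

theorem lintegral_prod_gagliardoKernel (ha : Measurable a) :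
    ∫⁻ z, gagliardoKernel p ε a z ∂((volume.restrict s).prod (volume.restrict s)) =
      ∫⁻ x in s, ∫⁻ y in s, gagliardoKernel p ε a (x, y) :=
  lintegral_prod _ (measurable_gagliardoKernel ha).aemeasurable

namespace MemFracSobolev

theorem lintegral_prod_gagliardoKernel_lt_top (ha : MemFracSobolev p ε s a) :
    ∫⁻ z, gagliardoKernel p ε a z ∂((volume.restrict s).prod (volume.restrict s)) < ⊤ :=
  (lintegral_prod_gagliardoKernel ha.measurable).trans_lt ha.gagliardo_lt_top

theorem add (hp : 0 ≤ p) (ha : MemFracSobolev p ε s a) (hb : MemFracSobolev p ε s b) :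
    MemFracSobolev p ε s fun x => a x + b x := by
  have hmeas : Measurable fun x => a x + b x := ha.measurable.add hb.measurable
  refine ⟨hmeas, ?_, ?_⟩
  · refine lintegral_lt_top_of_ae_le_mul_add (c := ENNReal.ofReal (2 ^ p)) ENNReal.ofReal_ne_top
      (ha.measurable.abs.pow_const p).ennreal_ofReal.aemeasurable
      (Eventually.of_forall fun x => ?_) ha.lintegral_lt_top hb.lintegral_lt_top
    exact ENNReal.ofReal_le_ofReal_mul_add (by positivity) (by positivity) (by positivity)
      (rpow_abs_add_le hp _ _)
  · rw [← lintegral_prod_gagliardoKernel hmeas]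
    refine lintegral_lt_top_of_ae_le_mul_add (c := ENNReal.ofReal (2 ^ p)) ENNReal.ofReal_ne_top
      (measurable_gagliardoKernel ha.measurable).aemeasurable (Eventually.of_forall fun z => ?_)
      ha.lintegral_prod_gagliardoKernel_lt_top hb.lintegral_prod_gagliardoKernel_lt_top
    refine ENNReal.ofReal_le_ofReal_mul_add (by positivity) (by positivity) (by positivity) ?_
    rw [add_sub_add_comm, ← add_div, ← mul_div_assoc]
    gcongr
    exact rpow_abs_add_le hp _ _

theorem congr_ae (ha : MemFracSobolev p ε s a) (hb : Measurable b)
    (hab : a =ᵐ[volume.restrict s] b) : MemFracSobolev p ε s b := by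
  refine ⟨hb, ?_, ?_⟩
  · refine (lintegral_congr_ae ?_).trans_lt ha.lintegral_lt_top
    filter_upwards [hab] with x hx
    rw [hx]
  · refine (lintegral_congr_ae ?_).trans_lt ha.gagliardo_lt_top
    filter_upwards [hab] with x hx
    refine lintegral_congr_ae ?_
    filter_upwards [hab] with y hy
    simp only [gagliardoKernel, hx, hy]

theorem mul_of_lipschitzOnWith (hp : 0 < p) (hε : ε < 1) (hs : MeasurableSet s)
    (hsb : Bornology.IsBounded s) (ha : MemFracSobolev p ε s a) {φ : ℝ → ℝ}
    (hφ : Measurable φ) {C : ℝ} {K : ℝ≥0} (hφC : ∀ x ∈ s, |φ x| ≤ C)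
    (hφK : LipschitzOnWith K φ s) : MemFracSobolev p ε s fun x => a x * φ x := by
  have haφ : Measurable fun x => a x * φ x := ha.measurable.mul hφ
  have hC : ∀ x ∈ s, 0 ≤ C := fun x hx => (abs_nonneg _).trans (hφC x hx)
  refine ⟨haφ, ?_, ?_⟩
  · calc ∫⁻ x in s, ENNReal.ofReal (|a x * φ x| ^ p)
        ≤ ∫⁻ x in s, ENNReal.ofReal (C ^ p) * ENNReal.ofReal (|a x| ^ p) := by
          refine setLIntegral_mono' hs fun x hx => ?_
          rw [← ENNReal.ofReal_mul (rpow_nonneg (hC x hx) p), abs_mul,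
            mul_rpow (abs_nonneg _) (abs_nonneg _), mul_comm]
          gcongr
          exact hφC x hx
      _ = ENNReal.ofReal (C ^ p) * ∫⁻ x in s, ENNReal.ofReal (|a x| ^ p) :=
          lintegral_const_mul' _ _ ENNReal.ofReal_ne_top
      _ < ⊤ := ENNReal.mul_lt_top ENNReal.ofReal_lt_top ha.lintegral_lt_top
  · have hσ : -1 < p - (1 + p * ε) := by nlinarith
    rw [← lintegral_prod_gagliardoKernel haφ]
    refine lintegral_lt_top_of_ae_le_mul_add (c := ENNReal.ofReal (2 ^ p * (C ^ p + K ^ p)))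
      ENNReal.ofReal_ne_top (measurable_gagliardoKernel ha.measurable).aemeasurable ?_
      ha.lintegral_prod_gagliardoKernel_lt_top
      (lintegral_prod_mul_abs_sub_rpow_lt_top hs hsb hσ
        (ha.measurable.abs.pow_const p).ennreal_ofReal ha.lintegral_lt_top)
    rw [Measure.prod_restrict]
    filter_upwards [ae_restrict_mem (hs.prod hs)] with ⟨x, y⟩ ⟨hx, hy⟩
    rcases eq_or_ne y x with rfl | hxy
    · simp [gagliardoKernel, zero_rpow hp.ne']
    have hd : 0 < |y - x| := abs_pos.2 (sub_ne_zero.2 hxy)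
    have hCp : 0 ≤ C ^ p := rpow_nonneg (hC x hx) p
    rw [← ENNReal.ofReal_mul (by positivity)]
    refine ENNReal.ofReal_le_ofReal_mul_add (by positivity) (by positivity) (by positivity)
      (rpow_abs_mul_sub_mul_div_le hp.le hd (hφC y hy) ?_)
    simpa [Real.dist_eq] using hφK.dist_le_mul y hy x hx

theorem mul_of_contDiff (hp : 0 < p) (hε : ε < 1) (hs : MeasurableSet s)
    (hsb : Bornology.IsBounded s) (ha : MemFracSobolev p ε s a) {φ : ℝ → ℝ}
    (hφ : ContDiff ℝ 1 φ) : MemFracSobolev p ε s fun x => a x * φ x := by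
  obtain ⟨R, hR⟩ := hsb.subset_closedBall 0
  obtain ⟨K, hK⟩ := hφ.contDiffOn.exists_lipschitzOnWith one_ne_zero (convex_closedBall 0 R)
    (isCompact_closedBall 0 R)
  obtain ⟨C, hC⟩ := (isCompact_closedBall (0 : ℝ) R).exists_bound_of_continuousOn
    hφ.continuous.continuousOn
  exact ha.mul_of_lipschitzOnWith hp hε hs hsb hφ.continuous.measurable
    (fun x hx => hC x (hR hx)) (hK.mono hR)

end MemFracSobolev

end FracSobolev

theorem countable_setOf_eq_zero_and_deriv_ne_zero {E : Type*} [NormedAddCommGroup E]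
    [NormedSpace ℝ E] {F f : ℝ → E} (hF : ∀ x, HasDerivAt F (f x) x) :
    {x | F x = 0 ∧ f x ≠ 0}.Countable := by
  have : DiscreteTopology {x | F x = 0 ∧ f x ≠ 0} :=
    discreteTopology_subtype_iff.2 fun x hx => inf_principal_eq_bot.2 <|
      ((hF x).eventually_ne hx.2).mono fun _ hz hzD => hz hzD.1
  exact Set.countable_coe_iff.1 (TopologicalSpace.separableSpace_iff_countable.1 inferInstance)

theorem ae_eq_indicator_setOf_deriv_eq_zero {μ : Measure ℝ} [NullSingletonClass μ] {F f g : ℝ → ℝ}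
    (hF : ∀ x, HasDerivAt F (f x) x) (hgF : ∀ᵐ x ∂μ, g x * F x = 0) :
    g =ᵐ[μ] {x | f x = 0}.indicator g := by
  filter_upwards [hgF, (countable_setOf_eq_zero_and_deriv_ne_zero hF).ae_notMem μ]
    with x hgFx hx
  by_cases hfx : f x = 0
  · simp [hfx]
  · have hFx : F x ≠ 0 := fun hF0 => hx ⟨hF0, hfx⟩
    simp [hfx, (mul_eq_zero.1 hgFx).resolve_right hFx]

theorem angular_mul_eq_radial_mul_of_normal_eq_zero {F f u₁ u₂ θ : ℝ}
    (h : (F ^ 2 + f ^ 2) ^ (-(1 : ℝ) / 2) *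
      ((F * cos θ + f * sin θ) * u₁ + (F * sin θ - f * cos θ) * u₂) = 0) :
    (u₂ * cos θ + u₁ * -sin θ) * f = (u₁ * cos θ + u₂ * sin θ) * F := by
  rcases mul_eq_zero.1 h with h | h
  · -- the junk value `0 ^ (-1/2) = 0`, which forces `F = f = 0`
    obtain ⟨h0, -⟩ := (rpow_eq_zero_iff_of_nonneg (by positivity)).1 h
    have hF : F = 0 := by nlinarith [sq_nonneg F, sq_nonneg f]
    have hf : f = 0 := by nlinarith [sq_nonneg F, sq_nonneg f]
    simp [hF, hf]
  · linear_combination -h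

theorem stmt13_general (p ε : ℝ) (hp : 1 ≤ p) (hε1 : ε < 1)
    (f F u₁ u₂ : ℝ → ℝ)
    (hfc : Continuous f) (hfper : ∀ x, f (x + 2 * π) = f x)
    (hF : F = fun x => 1 + ∫ t in (0:ℝ)..x, f t)
    (hsep : ∀ a b : ℝ → ℝ, Measurable a → Measurable b →
      (∀ x, a (x + 2 * π) = a x) → (∀ x, b (x + 2 * π) = b x) →
      (∫⁻ x in Set.Ioo (0:ℝ) (2 * π), ENNReal.ofReal (|a x| ^ p) < ⊤) →
      (∫⁻ x in Set.Ioo (0:ℝ) (2 * π), ∫⁻ y in Set.Ioo (0:ℝ) (2 * π),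
          ENNReal.ofReal (|a y - a x| ^ p / |y - x| ^ (1 + p * ε)) < ⊤) →
      (∫⁻ x in Set.Ioo (0:ℝ) (2 * π), ∫⁻ y in Set.Ioo (0:ℝ) (2 * π),
          ENNReal.ofReal (|b y - b x| ^ p / |y - x| ^ (1 + p * ε)) < ⊤) →
      (∀ x, a x * f x = b x) →
      (∀ᵐ x ∂(volume.restrict (Set.Ioo (0:ℝ) (2 * π))), a x = 0 ∧ b x = 0))
    (hu₁ : Measurable u₁) (hu₂ : Measurable u₂)
    (hu₁per : ∀ x, u₁ (x + 2 * π) = u₁ x) (hu₂per : ∀ x, u₂ (x + 2 * π) = u₂ x)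
    (hu₁Lp : ∫⁻ x in Set.Ioo (0:ℝ) (2 * π), ENNReal.ofReal (|u₁ x| ^ p) < ⊤)
    (hu₂Lp : ∫⁻ x in Set.Ioo (0:ℝ) (2 * π), ENNReal.ofReal (|u₂ x| ^ p) < ⊤)
    (hu₁G : ∫⁻ x in Set.Ioo (0:ℝ) (2 * π), ∫⁻ y in Set.Ioo (0:ℝ) (2 * π),
        ENNReal.ofReal (|u₁ y - u₁ x| ^ p / |y - x| ^ (1 + p * ε)) < ⊤)
    (hu₂G : ∫⁻ x in Set.Ioo (0:ℝ) (2 * π), ∫⁻ y in Set.Ioo (0:ℝ) (2 * π),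
        ENNReal.ofReal (|u₂ y - u₂ x| ^ p / |y - x| ^ (1 + p * ε)) < ⊤)
    (hnormal : ∀ θ : ℝ,
      ((F θ) ^ 2 + (f θ) ^ 2) ^ (-(1:ℝ)/2) *
        ((F θ * Real.cos θ + f θ * Real.sin θ) * u₁ θ +
         (F θ * Real.sin θ - f θ * Real.cos θ) * u₂ θ) = 0) :
    (∀ᵐ θ ∂(volume.restrict (Set.Ioo (0:ℝ) (2 * π))), u₁ θ = 0 ∧ u₂ θ = 0) := by
  have hp0 : 0 < p := by linarith
  have hmul {a φ : ℝ → ℝ} (ha : MemFracSobolev p ε (Ioo 0 (2 * π)) a) (hφ : ContDiff ℝ 1 φ) :=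
    ha.mul_of_contDiff hp0 hε1 measurableSet_Ioo (Metric.isBounded_Ioo _ _) hφ
  have hFd : ∀ x, HasDerivAt F (f x) x := fun x => by
    subst hF; exact ((hfc.integral_hasStrictDerivAt 0 x).hasDerivAt).const_add 1
  have hFC : ContDiff ℝ 1 F := contDiff_one_iff_deriv.2
    ⟨fun x => (hFd x).differentiableAt, by rwa [funext fun x => (hFd x).deriv]⟩
  set g := fun x => u₁ x * cos x + u₂ x * sin x
  set A := fun x => u₂ x * cos x + u₁ x * -sin x
  have hAper : ∀ x, A (x + 2 * π) = A x := by simp [A, hu₁per, hu₂per]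
  have hAf : ∀ x, A x * f x = g x * F x := fun x =>
    angular_mul_eq_radial_mul_of_normal_eq_zero (hnormal x)
  have hu₁W : MemFracSobolev p ε (Ioo 0 (2 * π)) u₁ := ⟨hu₁, hu₁Lp, hu₁G⟩
  have hu₂W : MemFracSobolev p ε (Ioo 0 (2 * π)) u₂ := ⟨hu₂, hu₂Lp, hu₂G⟩
  have hgW := (hmul hu₁W contDiff_cos).add hp0.le (hmul hu₂W contDiff_sin)
  have hAW := (hmul hu₂W contDiff_cos).add hp0.le (hmul hu₁W contDiff_sin.neg)
  have hBW := hmul hgW hFC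
  have h₁ := hsep A _ hAW.measurable hBW.measurable hAper
    (fun x => by rw [← hAf, ← hAf, hAper, hfper])
    hAW.lintegral_lt_top hAW.gagliardo_lt_top hBW.gagliardo_lt_top hAf
  have hg := ae_eq_indicator_setOf_deriv_eq_zero hFd (h₁.mono fun x hx => hx.2)
  have hgW' := hgW.congr_ae
    (hgW.measurable.indicator (measurableSet_eq_fun hfc.measurable measurable_const)) hg
  have h₂ := hsep _ 0 hgW'.measurable measurable_const
    (fun x => by simp [indicator_apply, hfper, hu₁per, hu₂per]) (fun _ => rfl)
    hgW'.lintegral_lt_top hgW'.gagliardo_lt_top (by simp [zero_rpow hp0.ne'])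
    (fun x => by by_cases hfx : f x = 0 <;> simp [hfx])
  filter_upwards [h₁, h₂, hg] with x hAx hgx hgx'
  have hg0 : g x = 0 := hgx'.trans hgx.1
  constructor
  · linear_combination cos x * hg0 - sin x * hAx.1 - u₁ x * sin_sq_add_cos_sq x
  · linear_combination sin x * hg0 + cos x * hAx.1 - u₂ x * sin_sq_add_cos_sq x

/-- If `f` is continuous, `2π`-periodic and has the separation property
(`a f = b` with `a, b ∈ W^{ε,p}(𝕋)` forces `a = b = 0`), `F = 1 + ∫_0^· f` (so `F' = f`),
and `u₁, u₂` are the pullbacks to `𝕋` of the components of a vector field on the boundary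
curve `θ ↦ (F θ cos θ, F θ sin θ)` which lie in `W^{ε,p}(𝕋)` and whose normal component
`n·u` vanishes identically, then `u₁ = u₂ = 0` (a.e.). -/
theorem stmt13 (p ε : ℝ) (hp : 1 ≤ p) (hε : 0 < ε) (hε1 : ε < 1)
    (f F u₁ u₂ : ℝ → ℝ)
    (hfc : Continuous f) (hfper : ∀ x, f (x + 2 * π) = f x)
    (hF : F = fun x => 1 + ∫ t in (0:ℝ)..x, f t)
    (hsep : ∀ a b : ℝ → ℝ, Measurable a → Measurable b →
      (∀ x, a (x + 2 * π) = a x) → (∀ x, b (x + 2 * π) = b x) →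
      (∫⁻ x in Set.Ioo (0:ℝ) (2 * π), ENNReal.ofReal (|a x| ^ p) < ⊤) →
      (∫⁻ x in Set.Ioo (0:ℝ) (2 * π), ∫⁻ y in Set.Ioo (0:ℝ) (2 * π),
          ENNReal.ofReal (|a y - a x| ^ p / |y - x| ^ (1 + p * ε)) < ⊤) →
      (∫⁻ x in Set.Ioo (0:ℝ) (2 * π), ∫⁻ y in Set.Ioo (0:ℝ) (2 * π),
          ENNReal.ofReal (|b y - b x| ^ p / |y - x| ^ (1 + p * ε)) < ⊤) →
      (∀ x, a x * f x = b x) →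
      (∀ᵐ x ∂(volume.restrict (Set.Ioo (0:ℝ) (2 * π))), a x = 0 ∧ b x = 0))
    (hu₁ : Measurable u₁) (hu₂ : Measurable u₂)
    (hu₁per : ∀ x, u₁ (x + 2 * π) = u₁ x) (hu₂per : ∀ x, u₂ (x + 2 * π) = u₂ x)
    (hu₁Lp : ∫⁻ x in Set.Ioo (0:ℝ) (2 * π), ENNReal.ofReal (|u₁ x| ^ p) < ⊤)
    (hu₂Lp : ∫⁻ x in Set.Ioo (0:ℝ) (2 * π), ENNReal.ofReal (|u₂ x| ^ p) < ⊤)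
    (hu₁G : ∫⁻ x in Set.Ioo (0:ℝ) (2 * π), ∫⁻ y in Set.Ioo (0:ℝ) (2 * π),
        ENNReal.ofReal (|u₁ y - u₁ x| ^ p / |y - x| ^ (1 + p * ε)) < ⊤)
    (hu₂G : ∫⁻ x in Set.Ioo (0:ℝ) (2 * π), ∫⁻ y in Set.Ioo (0:ℝ) (2 * π),
        ENNReal.ofReal (|u₂ y - u₂ x| ^ p / |y - x| ^ (1 + p * ε)) < ⊤)
    (hnormal : ∀ θ : ℝ,
      ((F θ) ^ 2 + (f θ) ^ 2) ^ (-(1:ℝ)/2) *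
        ((F θ * Real.cos θ + f θ * Real.sin θ) * u₁ θ +
         (F θ * Real.sin θ - f θ * Real.cos θ) * u₂ θ) = 0) :
    (∀ᵐ θ ∂(volume.restrict (Set.Ioo (0:ℝ) (2 * π))), u₁ θ = 0 ∧ u₂ θ = 0) :=
  stmt13_general p ε hp hε1 f F u₁ u₂ hfc hfper hF hsep hu₁ hu₂ hu₁per hu₂per hu₁Lp hu₂Lp hu₁G hu₂G
    hnormal
end

section
/- Let s_m satisfy s₂ < 1/(q−1) and the recursion s_{m+1} = (s_m + 1)·q·2^{(1−q)q^m} for m ≥ 2, with integer q ≥ 7. Then s_m < 1/(q−1) for all m ≥ 2. -/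
/-! Since `q² · 2^(1-q) ≤ 1` for `q ≥ 7` and `2^((1-q)q^m) ≤ 2^(1-q)`, the factor
`A = q · 2^((1-q)q^m)` is at most `1/q`; so `s_m < 1/(q-1)` gives
`s_{m+1} < (1/(q-1) + 1) · (1/q) = 1/(q-1)`, and the bound propagates by induction. -/

open Real

theorem Nat.two_mul_sq_le_two_pow {n : ℕ} (hn : 7 ≤ n) : 2 * n ^ 2 ≤ 2 ^ n := by
  induction n, hn using Nat.le_induction with
  | base => norm_num
  | succ k hk ih =>
    calc 2 * (k + 1) ^ 2 ≤ 2 * (2 * k ^ 2) := by nlinarith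
      _ ≤ 2 ^ (k + 1) := by rw [pow_succ 2 k]; omega

theorem sq_mul_two_rpow_one_sub_le_one {q : ℕ} (hq : 7 ≤ q) :
    (q : ℝ) ^ 2 * (2 : ℝ) ^ (1 - (q : ℝ)) ≤ 1 := by
  have hpow : 2 * (q : ℝ) ^ 2 ≤ 2 ^ q := by exact_mod_cast Nat.two_mul_sq_le_two_pow hq
  rw [rpow_sub two_pos, rpow_one, rpow_natCast, mul_div_assoc', div_le_one (by positivity)]
  linarith

theorem two_rpow_one_sub_mul_pow_le {q : ℝ} (hq : 1 ≤ q) (m : ℕ) :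
    (2 : ℝ) ^ ((1 - q) * q ^ m) ≤ 2 ^ (1 - q) := by
  apply rpow_le_rpow_of_exponent_le one_le_two
  nlinarith [one_le_pow₀ (n := m) hq]

theorem add_one_mul_mul_lt_inv_sub_one {q x A : ℝ} (hq : 1 < q) (hA : 0 < A)
    (hqA : q ^ 2 * A ≤ 1) (hx : x < 1 / (q - 1)) : (x + 1) * q * A < 1 / (q - 1) := by
  have hq1 : 0 < q - 1 := sub_pos.mpr hq
  calc (x + 1) * q * A < (1 / (q - 1) + 1) * q * A := by gcongr
    _ = q ^ 2 * A / (q - 1) := by field_simp; ring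
    _ ≤ 1 / (q - 1) := by gcongr

/-- If `s 2 < 1/(q−1)` and `s (m+1) = (s m + 1) · q · 2^{(1−q)q^m}` for `m ≥ 2`, with
integer `q ≥ 7`, then `s m < 1/(q−1)` for all `m ≥ 2`. -/
theorem stmt19 (q : ℕ) (hq : 7 ≤ q) (s : ℕ → ℝ)
    (h2 : s 2 < 1 / ((q : ℝ) - 1))
    (hrec : ∀ m : ℕ, 2 ≤ m →
      s (m + 1) = (s m + 1) * q * (2 : ℝ) ^ ((1 - (q : ℝ)) * (q : ℝ) ^ m)) :
    ∀ m : ℕ, 2 ≤ m → s m < 1 / ((q : ℝ) - 1) := by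
  have hq7 : (7 : ℝ) ≤ q := by exact_mod_cast hq
  intro m hm
  induction m, hm using Nat.le_induction with
  | base => exact h2
  | succ m hm ih =>
    rw [hrec m hm]
    refine add_one_mul_mul_lt_inv_sub_one (q := (q : ℝ)) (by linarith) (by positivity) ?_ ih
    calc (q : ℝ) ^ 2 * 2 ^ ((1 - (q : ℝ)) * (q : ℝ) ^ m)
        ≤ (q : ℝ) ^ 2 * 2 ^ (1 - (q : ℝ)) :=
          mul_le_mul_of_nonneg_left (two_rpow_one_sub_mul_pow_le (by linarith) m) (by positivity)
      _ ≤ 1 := sq_mul_two_rpow_one_sub_le_one hq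
end
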